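/- Null channel properties: let C₁ : X×Y₁ → ℝ be a channel, R a null channel compatible with C₁, and p ∈ [0,1]. Then (i) (C₁ ∥ R) ≡ C₁; (ii) C₁ ⊑ (C₁ ⊞_p R); and (iii) C₁ ⊑ (C₁ ⊕_p R). -/

import Mathlib

open Finset

/-- A channel with input set `X` and output set `Y`: entries are nonnegative
and each row sums to `1`. -/
def IsChannel {X Y : Type*} [Fintype Y] (C : X → Y → ℝ) : Prop :=
  (∀ x y, 0 ≤ C x y) ∧ ∀ x, ∑ y, C x y = 1

/-- A channel with input set `X` whose output set is the finset `S` of a common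
ambient type `Ω`: entries are nonnegative, each row sums to `1` over `S`, and
entries vanish outside `S`. -/
def IsChannelOn {X Ω : Type*} (S : Finset Ω) (C : X → Ω → ℝ) : Prop :=
  (∀ x y, 0 ≤ C x y) ∧ (∀ x, ∑ y ∈ S, C x y = 1) ∧ ∀ x y, y ∉ S → C x y = 0

/-- Parallel composition `C₁ ∥ C₂`. -/
def par {X Y₁ Y₂ : Type*} (C₁ : X → Y₁ → ℝ) (C₂ : X → Y₂ → ℝ) : X → Y₁ × Y₂ → ℝ :=
  fun x y => C₁ x y.1 * C₂ x y.2

/-- Visible choice `C₁ ⊞_p C₂`, on the disjoint union of the output sets. -/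
def vis {X Y₁ Y₂ : Type*} (p : ℝ) (C₁ : X → Y₁ → ℝ) (C₂ : X → Y₂ → ℝ) : X → Y₁ ⊕ Y₂ → ℝ :=
  fun x => Sum.elim (fun y => p * C₁ x y) (fun y => (1 - p) * C₂ x y)

/-- Hidden choice `C₁ ⊕_p C₂` for channels whose output sets lie in a common
ambient type (pointwise convex combination; this agrees with the case analysis
on `Y₁ ∩ Y₂`, `Y₁ \ Y₂`, `Y₂ \ Y₁` since channels vanish outside their output sets). -/
def hid {X Ω : Type*} (p : ℝ) (C₁ C₂ : X → Ω → ℝ) : X → Ω → ℝ :=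
  fun x y => p * C₁ x y + (1 - p) * C₂ x y

/-- Equality up to a permutation of the output set, `C₁ ≐ C₂`. -/
def PermEq {X Y₁ Y₂ : Type*} (C₁ : X → Y₁ → ℝ) (C₂ : X → Y₂ → ℝ) : Prop :=
  ∃ ψ : Y₁ ≃ Y₂, ∀ x y, C₁ x y = C₂ x (ψ y)

/-- Cascading `CD` of channels. -/
def cascade {X Y Z : Type*} [Fintype Y] (C : X → Y → ℝ) (D : Y → Z → ℝ) : X → Z → ℝ :=
  fun x z => ∑ y, C x y * D y z

/-- `Refines C₁ C₂` (written `C₁ ⊑ C₂`): there is a channel `D` with `C₁D = C₂`. -/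
def Refines {X Y₁ Y₂ : Type*} [Fintype Y₁] [Fintype Y₂] (C₁ : X → Y₁ → ℝ)
    (C₂ : X → Y₂ → ℝ) : Prop :=
  ∃ D : Y₁ → Y₂ → ℝ, IsChannel D ∧ cascade C₁ D = C₂

/-- Equivalence of channels: mutual refinement. -/
def EquivCh {X Y₁ Y₂ : Type*} [Fintype Y₁] [Fintype Y₂] (C₁ : X → Y₁ → ℝ)
    (C₂ : X → Y₂ → ℝ) : Prop :=
  Refines C₁ C₂ ∧ Refines C₂ C₁

/-- A prior: a probability distribution on the finite input set `X`. -/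
def IsPrior {X : Type*} [Fintype X] (π : X → ℝ) : Prop :=
  (∀ x, 0 ≤ π x) ∧ ∑ x, π x = 1

/-- A gain function `g : W × X → [0,1]`. -/
def IsGain {W X : Type*} (g : W → X → ℝ) : Prop :=
  ∀ w x, 0 ≤ g w x ∧ g w x ≤ 1

/-- Posterior g-vulnerability `V_g[π, C]`. -/
noncomputable def postV {W X Y : Type*} [Fintype W] [Nonempty W] [Fintype X] [Fintype Y]
    (π : X → ℝ) (g : W → X → ℝ) (C : X → Y → ℝ) : ℝ :=
  ∑ y, univ.sup' univ_nonempty fun w => ∑ x, C x y * π x * g w x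

/-!
A null channel is a constant channel `fun _ => r` for a distribution `r`, which is what every
channel becomes after post-processing by the constant channel `r`. Cascading distributes over
visible and hidden choice, so from `C ⊑ C` and `C ⊑ R` we get `C ⊑ C ⊞_p R` and `C ⊑ C ⊕_p R`.
Likewise `C ∥ R` is `C` post-processed by `y ↦ δ_y ⊗ r`, and projecting onto the first
component undoes this.
-/

lemma IsChannelOn.isChannel {X Ω : Type*} [Fintype Ω] {S : Finset Ω} {C : X → Ω → ℝ}
    (h : IsChannelOn S C) : IsChannel C := by
  refine ⟨h.1, fun x => ?_⟩
  rw [← Finset.sum_subset (Finset.subset_univ S) (fun y _ hy => h.2.2 x y hy)]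
  exact h.2.1 x

lemma exists_eq_const_of_null {X Y : Type*} [Fintype Y] [Nonempty Y] {R : X → Y → ℝ}
    (hR : IsChannel R) (hnull : ∀ x x' y, R x y = R x' y) :
    ∃ r : Y → ℝ, IsChannel (fun _ : Y => r) ∧ R = fun _ => r := by
  rcases isEmpty_or_nonempty X with hX | ⟨⟨x₀⟩⟩
  · classical
    obtain ⟨y₀⟩ := ‹Nonempty Y›
    exact ⟨Pi.single y₀ 1, ⟨fun _ y => by by_cases h : y = y₀ <;> simp [h], fun _ => by simp⟩,
      funext fun x => isEmptyElim x⟩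
  · exact ⟨R x₀, ⟨fun _ => hR.1 x₀, fun _ => hR.2 x₀⟩, funext fun x => funext (hnull x x₀)⟩

section Cascade

variable {X Y Z W : Type*} [Fintype Y]

lemma cascade_one [DecidableEq Y] (C : X → Y → ℝ) : cascade C (1 : Matrix Y Y ℝ) = C :=
  Matrix.mul_one (M := C)

lemma cascade_const {C : X → Y → ℝ} (hC : ∀ x, ∑ y, C x y = 1) (r : Z → ℝ) :
    cascade C (fun _ => r) = fun _ => r := by
  funext x z
  simp only [cascade, ← Finset.sum_mul, hC x, one_mul]

lemma cascade_par_const (C : X → Y → ℝ) (D : Y → Z → ℝ) (r : W → ℝ) :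
    cascade C (par D fun _ => r) = par (cascade C D) fun _ => r := by
  funext x zw
  simp only [cascade, par, ← mul_assoc, ← Finset.sum_mul]

lemma cascade_vis (p : ℝ) (C : X → Y → ℝ) (D : Y → Z → ℝ) (E : Y → W → ℝ) :
    cascade C (vis p D E) = vis p (cascade C D) (cascade C E) := by
  funext x zw
  cases zw <;> simp only [cascade, vis, Sum.elim_inl, Sum.elim_inr, Finset.mul_sum, mul_left_comm]

lemma cascade_hid (p : ℝ) (C : X → Y → ℝ) (D E : Y → Z → ℝ) :
    cascade C (hid p D E) = hid p (cascade C D) (cascade C E) := by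
  funext x z
  simp only [cascade, hid, mul_add, Finset.sum_add_distrib, Finset.mul_sum, mul_left_comm]

end Cascade

section IsChannel

variable {Y Z W : Type*} [Fintype Z] [Fintype W]

lemma isChannel_one [DecidableEq Z] : IsChannel (1 : Matrix Z Z ℝ) :=
  ⟨fun y z => by by_cases h : y = z <;> simp [Matrix.one_apply, h],
    fun y => by simp [Matrix.one_apply]⟩

lemma IsChannel.par {D : Y → Z → ℝ} {E : Y → W → ℝ} (hD : IsChannel D) (hE : IsChannel E) :
    IsChannel (par D E) :=
  ⟨fun y zw => mul_nonneg (hD.1 y zw.1) (hE.1 y zw.2),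
    fun y => by simp only [_root_.par, Fintype.sum_prod_type, ← Finset.mul_sum,
      hD.2 y, hE.2 y, mul_one]⟩

lemma IsChannel.vis {p : ℝ} (hp : p ∈ Set.Icc (0 : ℝ) 1) {D : Y → Z → ℝ} {E : Y → W → ℝ}
    (hD : IsChannel D) (hE : IsChannel E) : IsChannel (vis p D E) := by
  obtain ⟨hp0, hp1⟩ := hp
  refine ⟨fun y zw => ?_, fun y => ?_⟩
  · cases zw with
    | inl z => exact mul_nonneg hp0 (hD.1 y z)
    | inr w => exact mul_nonneg (sub_nonneg.2 hp1) (hE.1 y w)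
  · simp only [_root_.vis, Fintype.sum_sum_type, Sum.elim_inl, Sum.elim_inr, ← Finset.mul_sum,
      hD.2 y, hE.2 y]
    ring

lemma IsChannel.hid {p : ℝ} (hp : p ∈ Set.Icc (0 : ℝ) 1) {D E : Y → Z → ℝ}
    (hD : IsChannel D) (hE : IsChannel E) : IsChannel (hid p D E) := by
  obtain ⟨hp0, hp1⟩ := hp
  refine ⟨fun y z => add_nonneg (mul_nonneg hp0 (hD.1 y z))
    (mul_nonneg (sub_nonneg.2 hp1) (hE.1 y z)), fun y => ?_⟩
  simp only [_root_.hid, Finset.sum_add_distrib, ← Finset.mul_sum, hD.2 y, hE.2 y]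
  ring

end IsChannel

section Refines

variable {X Y Z W : Type*} [Fintype Y] [Fintype Z] [Fintype W]

lemma Refines.refl (C : X → Y → ℝ) : Refines C C := by
  classical
  exact ⟨(1 : Matrix Y Y ℝ), isChannel_one, cascade_one C⟩

lemma refines_of_isEmpty [IsEmpty X] [IsEmpty Y] (A : X → Y → ℝ) (B : X → Z → ℝ) :
    Refines A B :=
  ⟨fun y => isEmptyElim y, ⟨fun y => isEmptyElim y, fun y => isEmptyElim y⟩,
    funext fun x => isEmptyElim x⟩

lemma refines_const {C : X → Y → ℝ} (hC : ∀ x, ∑ y, C x y = 1) {r : Z → ℝ}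
    (hr : IsChannel (fun _ : Y => r)) : Refines C fun _ => r :=
  ⟨_, hr, cascade_const hC r⟩

lemma refines_par_left (A : X → Y → ℝ) {B : X → Z → ℝ}
    (hB : ∀ x, ∑ z, B x z = 1) : Refines (par A B) A := by
  classical
  refine ⟨fun yz y => (1 : Matrix Y Y ℝ) yz.1 y,
    ⟨fun yz y => isChannel_one.1 yz.1 y, fun yz => isChannel_one.2 yz.1⟩, ?_⟩
  funext x y
  simp [cascade, par, Fintype.sum_prod_type, Matrix.one_apply, ← Finset.mul_sum, hB x]

lemma Refines.par_const {C : X → Y → ℝ} {A : X → Z → ℝ} (hA : Refines C A) {r : W → ℝ}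
    (hr : IsChannel (fun _ : Y => r)) : Refines C (par A fun _ => r) := by
  obtain ⟨D, hD, rfl⟩ := hA
  exact ⟨_, hD.par hr, cascade_par_const C D r⟩

lemma Refines.vis {p : ℝ} (hp : p ∈ Set.Icc (0 : ℝ) 1) {C : X → Y → ℝ} {A : X → Z → ℝ}
    {B : X → W → ℝ} (hA : Refines C A) (hB : Refines C B) : Refines C (vis p A B) := by
  obtain ⟨D, hD, rfl⟩ := hA
  obtain ⟨E, hE, rfl⟩ := hB
  exact ⟨_, hD.vis hp hE, cascade_vis p C D E⟩

lemma Refines.hid {p : ℝ} (hp : p ∈ Set.Icc (0 : ℝ) 1) {C : X → Y → ℝ} {A B : X → Z → ℝ}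
    (hA : Refines C A) (hB : Refines C B) : Refines C (hid p A B) := by
  obtain ⟨D, hD, rfl⟩ := hA
  obtain ⟨E, hE, rfl⟩ := hB
  exact ⟨_, hD.hid hp hE, cascade_hid p C D E⟩

end Refines

theorem null_channel_properties {X Ω : Type*} [Fintype Ω]
    (Y₁ YR : Finset Ω) (C₁ R : X → Ω → ℝ)
    (h₁ : IsChannelOn Y₁ C₁) (hR : IsChannelOn YR R)
    (hnull : ∀ x x' y, R x y = R x' y)
    (p : ℝ) (hp : p ∈ Set.Icc (0:ℝ) 1) :
    EquivCh (par C₁ R) C₁ ∧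
    Refines C₁ (vis p C₁ R) ∧
    Refines C₁ (hid p C₁ R) := by
  rcases isEmpty_or_nonempty Ω with hΩ | hΩ
  · have : IsEmpty X := ⟨fun x => by simpa using h₁.isChannel.2 x⟩
    exact ⟨⟨refines_of_isEmpty _ _, refines_of_isEmpty _ _⟩,
      refines_of_isEmpty _ _, refines_of_isEmpty _ _⟩
  have hRch := hR.isChannel
  obtain ⟨r, hr, rfl⟩ := exists_eq_const_of_null hRch hnull
  have hC₁ : ∀ x, ∑ y, C₁ x y = 1 := h₁.isChannel.2
  exact ⟨⟨refines_par_left C₁ hRch.2, (Refines.refl C₁).par_const hr⟩,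
    (Refines.refl C₁).vis hp (refines_const hC₁ hr),
    (Refines.refl C₁).hid hp (refines_const hC₁ hr)⟩
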